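/- arXiv:cs/0509052 — 3 statements merged into one kernel-verified Lean document; each statement's English description precedes it below -/
import Mathlib

section
/- Sufficient viability condition: if φ₀ = 0 and N·k̄·ρ·Σ_s g(s)h(s) > 1, then the net influx r(n) = N·P(n) - n, where P(n) = Σ_s h(s)(1 - exp(-ρ·n·k̄·g(s))), satisfies r(0) = 0 and r'(0) > 0; hence the empty club (n = 0) is an unstable equilibrium. -/
open Real

theorem hasDerivAt_one_sub_exp_neg_mul_zero (c : ℝ) :
    HasDerivAt (fun x : ℝ => 1 - exp (-(c * x))) c 0 := by
  have hlin : HasDerivAt (fun x : ℝ => -(c * x)) (-c) 0 := by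
    simpa using ((hasDerivAt_id (0 : ℝ)).const_mul c).fun_neg
  simpa using ((hasDerivAt_exp _).comp 0 hlin).const_sub 1

theorem hasDerivAt_sum_mul_one_sub_exp_neg_mul_zero {S : Type*} [Fintype S] (w c : S → ℝ) :
    HasDerivAt (fun x : ℝ => ∑ s, w s * (1 - exp (-(c s * x)))) (∑ s, w s * c s) 0 :=
  HasDerivAt.fun_sum fun s _ => (hasDerivAt_one_sub_exp_neg_mul_zero (c s)).const_mul (w s)

theorem stmt_6_general (S : Type*) [Fintype S]
    (g h : S → ℝ)
    (N k ρ : ℝ)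
    (hviab : 1 < N * k * ρ * ∑ s, g s * h s)
    (r : ℝ → ℝ)
    (hr : r = fun n => N * (∑ s, h s * (1 - Real.exp (-(ρ * (n * k) * g s)))) - n) :
    r 0 = 0 ∧ 0 < deriv r 0 := by
  have hr' : r = fun n => N * (∑ s, h s * (1 - exp (-(ρ * k * g s * n)))) - n := by
    rw [hr]
    funext n
    congr 2
    exact Finset.sum_congr rfl fun s _ => by ring_nf
  have hderiv : HasDerivAt r (N * ∑ s, h s * (ρ * k * g s) - 1) 0 := by
    rw [hr']
    exact ((hasDerivAt_sum_mul_one_sub_exp_neg_mul_zero h _).const_mul N).sub (hasDerivAt_id 0)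
  have hslope : N * ∑ s, h s * (ρ * k * g s) = N * k * ρ * ∑ s, g s * h s := by
    simp only [Finset.mul_sum]
    exact Finset.sum_congr rfl fun s _ => by ring
  refine ⟨by simp [hr], ?_⟩
  rw [hderiv.deriv, hslope]
  linarith

/-- Sufficient viability condition: if φ₀ = 0 and N·k̄·ρ·Σ_s g(s)h(s) > 1, then the net influx
r(n) = N·P(n) - n satisfies r(0) = 0 and r'(0) > 0, so the empty club is unstable. -/
theorem stmt_6 (S : Type*) [Fintype S]
    (g h : S → ℝ) (hg0 : ∀ s, 0 ≤ g s) (hh0 : ∀ s, 0 ≤ h s)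
    (hg1 : ∑ s, g s = 1) (hh1 : ∑ s, h s = 1)
    (N k ρ : ℝ) (hN : 0 < N) (hk : 0 < k) (hρ : 0 < ρ)
    (hviab : 1 < N * k * ρ * ∑ s, g s * h s)
    (r : ℝ → ℝ)
    (hr : r = fun n => N * (∑ s, h s * (1 - Real.exp (-(ρ * (n * k) * g s)))) - n) :
    r 0 = 0 ∧ 0 < deriv r 0 :=
  stmt_6_general S g h N k ρ hviab r hr
end

section
/- Uniqueness of the positive equilibrium: if P : [0,∞) → [0,1) is strictly concave and increasing with P(0) = 0 and N·P'(0) > 1, then the equation N·P(n) = n has exactly one solution n* > 0. -/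
/-!
Strict concavity with `P 0 = 0` makes the secant slope `n ↦ P n / n` strictly decreasing on
`(0, ∞)`, and the positive solutions of `N * P n = n` are exactly the points where this slope
equals `N⁻¹`, so there is at most one. The slope tends to `P' 0 > N⁻¹` as `n → 0⁺`, while
`P < 1` forces it below `N⁻¹` at `n = N + 1`; the intermediate value theorem gives a solution.
-/

open Set Filter Topology

theorem StrictConcaveOn.strictAntiOn_slope {𝕜 : Type*} [Field 𝕜] [LinearOrder 𝕜]
    [IsStrictOrderedRing 𝕜] {s : Set 𝕜} {f : 𝕜 → 𝕜} {a : 𝕜} (hf : StrictConcaveOn 𝕜 s f)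
    (ha : a ∈ s) : StrictAntiOn (slope f a) (s \ {a}) := by
  intro x hx y hy hxy
  rw [slope_def_field, slope_def_field]
  exact hf.secant_strict_mono ha hx.1 hy.1 hx.2 hy.2 hxy

theorem mul_eq_self_iff_slope_zero_eq {𝕜 : Type*} [Field 𝕜] {f : 𝕜 → 𝕜} {c x : 𝕜}
    (hf0 : f 0 = 0) (hx : x ≠ 0) (hc : c ≠ 0) : c * f x = x ↔ slope f 0 x = c⁻¹ := by
  rw [slope_def_field, hf0, sub_zero, sub_zero, div_eq_iff hx, eq_inv_mul_iff_mul_eq₀ hc]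

theorem exists_mem_Ioo_eq_of_tendsto_nhdsGT {g : ℝ → ℝ} {a b L y : ℝ} (hab : a < b)
    (hg : ContinuousOn g (Ioc a b)) (hlim : Tendsto g (𝓝[>] a) (𝓝 L)) (hyL : y < L)
    (hby : g b < y) : ∃ x ∈ Ioo a b, g x = y := by
  obtain ⟨x₀, hyx₀, hx₀⟩ := ((hlim.eventually (eventually_gt_nhds hyL)).and
    (Ioo_mem_nhdsGT hab)).exists
  obtain ⟨x, hx, rfl⟩ := intermediate_value_Ico' hx₀.2.le
    (hg.mono (Icc_subset_Ioc_iff hx₀.2.le |>.mpr ⟨hx₀.1, le_rfl⟩)) ⟨hby, hyx₀.le⟩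
  exact ⟨x, ⟨hx₀.1.trans_le hx.1, hx.2⟩, rfl⟩

theorem stmt_9_general (N : ℝ) (hN : 0 < N) (P : ℝ → ℝ)
    (hrange : ∀ n, 0 ≤ n → 0 ≤ P n ∧ P n < 1)
    (hconc : StrictConcaveOn ℝ (Set.Ici 0) P)
    (hdiff : Differentiable ℝ P)
    (hP0 : P 0 = 0)
    (hslope : 1 < N * deriv P 0) :
    ∃! n : ℝ, 0 < n ∧ N * P n = n := by
  have hanti : StrictAntiOn (slope P 0) (Ioi 0) :=
    (hconc.strictAntiOn_slope self_mem_Ici).mono fun _ hx => ⟨mem_Ici.mpr (le_of_lt hx), ne_of_gt hx⟩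
  have hfix : ∀ n, 0 < n → (N * P n = n ↔ slope P 0 n = N⁻¹) := fun n hn =>
    mul_eq_self_iff_slope_zero_eq hP0 hn.ne' hN.ne'
  have hlim : Tendsto (slope P 0) (𝓝[>] 0) (𝓝 (deriv P 0)) :=
    (hasDerivAt_iff_tendsto_slope_left_right.mp (hdiff 0).hasDerivAt).2
  have hcont : ContinuousOn (slope P 0) (Ioi 0) := by
    rw [slope_fun_def_field]
    exact ((hdiff.continuous.sub continuous_const).continuousOn).div
      (continuous_id.sub continuous_const).continuousOn fun x hx => sub_ne_zero.mpr (ne_of_gt hx)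
  have hend : slope P 0 (N + 1) < N⁻¹ := by
    rw [slope_def_field, hP0, sub_zero, sub_zero, div_lt_iff₀ (by linarith)]
    nlinarith [(hrange (N + 1) (by linarith)).2, inv_mul_cancel₀ hN.ne', inv_pos.mpr hN]
  obtain ⟨n, hn, hn_slope⟩ := exists_mem_Ioo_eq_of_tendsto_nhdsGT (by linarith)
    (hcont.mono Ioc_subset_Ioi_self) hlim ((inv_lt_iff_one_lt_mul₀' hN).mpr hslope) hend
  refine ⟨n, ⟨hn.1, (hfix n hn.1).mpr hn_slope⟩, fun m hm => hanti.injOn hm.1 hn.1 ?_⟩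
  rw [(hfix m hm.1).mp hm.2, hn_slope]

/-- Uniqueness of the positive equilibrium: if P : [0,∞) → [0,1) is strictly concave,
strictly increasing, differentiable, with P(0) = 0 and N·P'(0) > 1, then
N·P(n) = n has exactly one solution n* > 0. -/
theorem stmt_9 (N : ℝ) (hN : 0 < N) (P : ℝ → ℝ)
    (hrange : ∀ n, 0 ≤ n → 0 ≤ P n ∧ P n < 1)
    (hconc : StrictConcaveOn ℝ (Set.Ici 0) P)
    (hmono : StrictMonoOn P (Set.Ici 0))
    (hdiff : Differentiable ℝ P)
    (hP0 : P 0 = 0)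
    (hslope : 1 < N * deriv P 0) :
    ∃! n : ℝ, 0 < n ∧ N * P n = n :=
  stmt_9_general N hN P hrange hconc hdiff hP0 hslope
end

section
/- Equilibrium club size is monotone in the overlap: in the single-peer-type model with P(n) = 1 - exp(-ρ·n·k̄·α) where α = Σ_s g(s)h(s) > 0, if N·ρ·k̄·α > 1 then the unique positive fixed point n*(α) of N·P(n) = n is strictly increasing in α. -/
/-!
For fixed `N` and rate `a`, the gap `g_a(n) = N·(1 - exp(-a·n)) - n` is concave with `g_a(0) = 0`,
so `g_a(n)/n` is antitone on `n > 0`: once `g_a` is positive at some `n₁`, it stays positive on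
`(0, n₁]`. The fixed points are the positive zeros of `g_a` with `a = ρ·k·α`. Since `g_a(n)` is
strictly increasing in `a`, `g_{a₂}(n₁) > g_{a₁}(n₁) = 0`, and so the zero `n₂` of `g_{a₂}`
cannot lie in `(0, n₁]`.
-/

open Real Set

noncomputable def fixedPointGap (N a n : ℝ) : ℝ := N * (1 - exp (-(a * n))) - n

theorem ConcaveOn.pos_of_pos_of_le {𝕜 : Type*} [Field 𝕜] [LinearOrder 𝕜] [IsStrictOrderedRing 𝕜]
    {s : Set 𝕜} {f : 𝕜 → 𝕜} (hf : ConcaveOn 𝕜 s f) (h0 : 0 ∈ s) (hf0 : f 0 = 0)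
    {x y : 𝕜} (hx : x ∈ s) (hy : y ∈ s) (hy0 : 0 < y) (hyx : y ≤ x) (hfx : 0 < f x) :
    0 < f y := by
  have hslope := hf.antitoneOn_slope_gt h0 ⟨hy, hy0⟩ ⟨hx, hy0.trans_le hyx⟩ hyx
  simp only [slope_def_field, hf0, sub_zero] at hslope
  exact (div_pos_iff_of_pos_right hy0).mp ((div_pos hfx (hy0.trans_le hyx)).trans_le hslope)

theorem convexOn_exp_neg_mul (a : ℝ) : ConvexOn ℝ univ fun n => exp (-(a * n)) := by
  refine (convexOn_exp.comp_linearMap ((-a) • LinearMap.id : ℝ →ₗ[ℝ] ℝ)).congr fun n _ => ?_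
  simp

theorem concaveOn_fixedPointGap {N : ℝ} (hN : 0 ≤ N) (a : ℝ) :
    ConcaveOn ℝ univ (fixedPointGap N a) := by
  refine ((((convexOn_exp_neg_mul a).smul hN).neg.add_const N).sub
    (convexOn_id convex_univ)).congr fun n _ => ?_
  simp only [fixedPointGap, Pi.sub_apply, Pi.add_apply, Pi.neg_apply, id, smul_eq_mul]
  ring

@[simp] theorem fixedPointGap_zero (N a : ℝ) : fixedPointGap N a 0 = 0 := by
  simp [fixedPointGap]

theorem fixedPointGap_lt_of_lt {N a b n : ℝ} (hN : 0 < N) (hn : 0 < n) (hab : a < b) :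
    fixedPointGap N a n < fixedPointGap N b n := by
  unfold fixedPointGap
  gcongr

theorem stmt_18_general (N ρ k : ℝ) (hN : 0 < N) (hρ : 0 < ρ) (hk : 0 < k)
    (α₁ α₂ : ℝ) (hlt : α₁ < α₂)
    (n₁ n₂ : ℝ) (hn₁ : 0 < n₁) (hn₂ : 0 < n₂)
    (hfix₁ : N * (1 - Real.exp (-(ρ * n₁ * k * α₁))) = n₁)
    (hfix₂ : N * (1 - Real.exp (-(ρ * n₂ * k * α₂))) = n₂) :
    n₁ < n₂ := by
  have hgap : ∀ α n, N * (1 - exp (-(ρ * n * k * α))) - n = fixedPointGap N (ρ * k * α) n :=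
    fun α n => by rw [fixedPointGap]; ring_nf
  have hzero₁ : fixedPointGap N (ρ * k * α₁) n₁ = 0 := by rw [← hgap, hfix₁, sub_self]
  have hzero₂ : fixedPointGap N (ρ * k * α₂) n₂ = 0 := by rw [← hgap, hfix₂, sub_self]
  have hpos : 0 < fixedPointGap N (ρ * k * α₂) n₁ :=
    hzero₁ ▸ fixedPointGap_lt_of_lt hN hn₁ (by gcongr)
  by_contra! hle
  exact (concaveOn_fixedPointGap hN.le _).pos_of_pos_of_le (mem_univ 0) (fixedPointGap_zero N _)
    (mem_univ n₁) (mem_univ n₂) hn₂ hle hpos |>.ne' hzero₂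

/-- Equilibrium club size is monotone in the overlap: with P_α(n) = 1 - exp(-ρ·n·k̄·α),
if both overlaps give viable clubs and n₁, n₂ are the corresponding positive fixed points
of N·P_α(n) = n, then α₁ < α₂ implies n₁ < n₂. -/
theorem stmt_18 (N ρ k : ℝ) (hN : 0 < N) (hρ : 0 < ρ) (hk : 0 < k)
    (α₁ α₂ : ℝ) (hα₁ : α₁ ∈ Set.Ioc (0:ℝ) 1) (hα₂ : α₂ ∈ Set.Ioc (0:ℝ) 1)
    (hlt : α₁ < α₂)
    (hviab₁ : 1 < N * ρ * k * α₁)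
    (n₁ n₂ : ℝ) (hn₁ : 0 < n₁) (hn₂ : 0 < n₂)
    (hfix₁ : N * (1 - Real.exp (-(ρ * n₁ * k * α₁))) = n₁)
    (hfix₂ : N * (1 - Real.exp (-(ρ * n₂ * k * α₂))) = n₂) :
    n₁ < n₂ :=
  stmt_18_general N ρ k hN hρ hk α₁ α₂ hlt n₁ n₂ hn₁ hn₂ hfix₁ hfix₂
end
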